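/- arXiv:2206.08595 — 4 statements merged into one kernel-verified Lean document; each statement's English description precedes it below -/
import Mathlib

section
/- Let R be a commutative ring, I an ideal of R, and g : ℕ → R a function such that (Δ^i g)(n) ∈ I^i for all integers i, n ≥ 0. Then for every integer B ≥ 1 and every s ∈ ℕ, one has g(s) − ∑_{i=0}^{B−1} (−1)^i (Δ^i g)(s+1) ∈ I^B. (Equivalently, the truncation of the formal inverse (1+Δ)^{−1} = ∑_{i≥0} (−1)^i Δ^i after B terms computes g(s) from the values g(s+1), …, g(s+B) up to an error in I^B.) -/
/-!
Since `f (x + h) = f x + Δ_h f x`, the alternating sum telescopes: the error made by truncating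
`(1 + Δ)⁻¹ = ∑ (-1)^i Δ^i` after `B` terms is exactly `(-1)^B Δ^B g s`, which lies in `I ^ B`.
-/

theorem sub_sum_neg_one_pow_mul_fwdDiff_iter_add {M R : Type*} [AddCommMonoid M] [Ring R]
    (h : M) (f : M → R) (B : ℕ) (x : M) :
    f x - ∑ i ∈ Finset.range B, (-1 : R) ^ i * (fwdDiff h)^[i] f (x + h)
      = (-1) ^ B * (fwdDiff h)^[B] f x := by
  induction B with
  | zero => simp
  | succ B ih =>
    rw [Finset.sum_range_succ, ← sub_sub, ih, Function.iterate_succ_apply' (fwdDiff h) B f,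
      fwdDiff, pow_succ]
    noncomm_ring

/-- **Rubin's truncated Neumann series.**
Let `R` be a commutative ring, `I` an ideal of `R`, and `g : ℕ → R` a function such that
`(Δ^i g)(n) ∈ I^i` for all `i, n ≥ 0`.  Then for every `B ≥ 1` and every `s : ℕ`,
`g s − ∑_{i=0}^{B−1} (−1)^i (Δ^i g)(s+1) ∈ I^B`. -/
theorem rubin_truncated_inverse
    (R : Type*) [CommRing R] (I : Ideal R) (g : ℕ → R)
    (hg : ∀ i n : ℕ, (fwdDiff 1)^[i] g n ∈ I ^ i) :
    ∀ B : ℕ, 1 ≤ B → ∀ s : ℕ,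
      g s - ∑ i ∈ Finset.range B, (-1 : R) ^ i * ((fwdDiff 1)^[i] g (s + 1)) ∈ I ^ B := by
  intro B _ s
  rw [sub_sum_neg_one_pow_mul_fwdDiff_iter_add]
  exact Ideal.mul_mem_left _ _ (hg B s)
end

section
/- Let R be a commutative ring, I an ideal of R, and g : ℕ → R a function such that (Δ^i g)(n) ∈ I^i for all integers i, n ≥ 0. Then for every integer B ≥ 1, g(0) − ∑_{j=1}^{B} (−1)^{j−1} (∑_{i=j}^{B} binom(i−1, j−1)) g(j) ∈ I^B, where binom denotes the binomial coefficient. -/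
/-!
By the hockey-stick identity the inner sum is `C(B, j)`, so the expression is the alternating
binomial sum `∑_{j=0}^{B} (-1)^j C(B, j) g(j) = (-1)^B (Δ^B g)(0)`, which lies in `I^B` by
hypothesis.
-/

open Finset

theorem Nat.sum_Icc_pred_choose (n k : ℕ) :
    ∑ i ∈ Icc (k + 1) n, (i - 1).choose k = n.choose (k + 1) := by
  cases n with
  | zero => simp
  | succ n =>
    rw [← Nat.sum_Icc_choose, ← Finset.map_add_right_Icc, Finset.sum_map]
    simp

theorem sum_range_neg_one_pow_choose_smul_shift_eq_fwdDiff_iter {M G : Type*} [AddCommMonoid M]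
    [AddCommGroup G] (h : M) (f : M → G) (n : ℕ) (y : M) :
    ∑ k ∈ range (n + 1), ((-1 : ℤ) ^ k * n.choose k) • f (y + k • h) =
      (-1 : ℤ) ^ n • (fwdDiff h)^[n] f y := by
  rw [fwdDiff_iter_eq_sum_shift, smul_sum]
  refine sum_congr rfl fun k hk => ?_
  have hkn : k ≤ n := Nat.lt_succ_iff.mp (mem_range.mp hk)
  rw [smul_smul, ← mul_assoc, ← pow_add, show n + (n - k) = k + 2 * (n - k) by omega, pow_add,
    pow_mul, neg_one_sq, one_pow, mul_one]

theorem sub_sum_Icc_neg_one_pow_pred_mul {R : Type*} [Ring R] (f : ℕ → R) (n : ℕ) :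
    f 0 - ∑ j ∈ Icc 1 n, (-1 : R) ^ (j - 1) * f j = ∑ j ∈ range (n + 1), (-1 : R) ^ j * f j := by
  rw [sum_range_succ', ← Ico_add_one_right_eq_Icc, sum_Ico_eq_sum_range]
  simp [pow_succ, sub_eq_add_neg, add_comm]

/-- **Abstract form of Rubin's theorem (Proposition MainProp).**
Let `R` be a commutative ring, `I` an ideal, and `g : ℕ → R` with `(Δ^i g)(n) ∈ I^i` for all
`i, n ≥ 0`.  Then for every `B ≥ 1`,
`g 0 − ∑_{j=1}^{B} (−1)^{j−1} (∑_{i=j}^{B} C(i−1, j−1)) g(j) ∈ I^B`. -/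
theorem rubin_interpolation
    (R : Type*) [CommRing R] (I : Ideal R) (g : ℕ → R)
    (hg : ∀ i n : ℕ, (fwdDiff 1)^[i] g n ∈ I ^ i) :
    ∀ B : ℕ, 1 ≤ B →
      g 0 - ∑ j ∈ Finset.Icc 1 B, (-1 : R) ^ (j - 1)
          * (∑ i ∈ Finset.Icc j B, ((i - 1).choose (j - 1) : R)) * g j ∈ I ^ B := by
  intro B _
  have hockey_stick : ∀ j ∈ Icc 1 B, ∑ i ∈ Icc j B, ((i - 1).choose (j - 1) : R) = B.choose j := by
    intro j hj
    obtain ⟨k, rfl⟩ := Nat.exists_eq_add_of_le' (mem_Icc.mp hj).1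
    rw [Nat.add_sub_cancel, ← Nat.cast_sum, Nat.sum_Icc_pred_choose]
  convert Ideal.mul_mem_left _ ((-1 : R) ^ B) (hg B 0) using 1
  calc _ = g 0 - ∑ j ∈ Icc 1 B, (-1 : R) ^ (j - 1) * (B.choose j * g j) := by
        simp_rw [← mul_assoc]
        exact congrArg _ (sum_congr rfl fun j hj => by rw [hockey_stick j hj])
    _ = ∑ j ∈ range (B + 1), (-1 : R) ^ j * (B.choose j * g j) := by
        simpa using sub_sum_Icc_neg_one_pow_pred_mul (fun j => (B.choose j : R) * g j) B
    _ = (-1 : R) ^ B * (fwdDiff 1)^[B] g 0 := by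
        simpa [zsmul_eq_mul, mul_assoc] using
          sum_range_neg_one_pow_choose_smul_shift_eq_fwdDiff_iter 1 g B 0
end

section
/- Fix a prime p, an element u ∈ ℤ_p with u − 1 ∈ pℤ_p, and a formal power series H ∈ ℤ_p[[X]]. The substituted power series H̃(X) := H(u·X + (u−1)) − H(X) is a well-defined element of ℤ_p[[X]] (the substitution is legitimate because the constant term u−1 of u·X + (u−1) is topologically nilpotent in ℤ_p), all of whose coefficients b_k lie in pℤ_p; moreover, writing g(n) := ∑_{k≥0} a_k (u^n − 1)^k for the Iwasawa function attached to H = ∑_{k≥0} a_k X^k, one has (Δg)(n) = ∑_{k≥0} b_k (u^n − 1)^k for every n ∈ ℕ. -/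
/-!
Write `ρ = ‖u - 1‖ < 1` and `t = u ^ n - 1`, so that `u * t + (u - 1) = u ^ (n + 1) - 1`.
Expanding `(u t + (u - 1)) ^ m` binomially, the double family
`a m * C(m, k) * u ^ k * (u - 1) ^ (m - k) * t ^ k` has norm at most `ρ ^ m` and vanishes
for `k > m`, so it is absolutely summable and the two iterated sums may be exchanged: summing
over `k` first gives `g (n + 1)`, summing over `m` first gives `∑ₖ (b k + a k) t ^ k`.
In the ultrametric norm each `b k` is bounded by `ρ`: its `m = k` term is `a k (u ^ k - 1)`
and the others are multiples of `(u - 1) ^ (m - k)`.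
-/

open Finset

lemma summable_of_norm_le_pow_fst {E : Type*} [NormedAddCommGroup E] [CompleteSpace E]
    {ρ : ℝ} (hρ₀ : 0 ≤ ρ) (hρ₁ : ρ < 1) {F : ℕ × ℕ → E}
    (hF : ∀ m k, k ≤ m → ‖F (m, k)‖ ≤ ρ ^ m) (hF₀ : ∀ m k, m < k → F (m, k) = 0) :
    Summable F := by
  set s := √ρ
  have hs₀ : 0 ≤ s := Real.sqrt_nonneg ρ
  have hs₁ : s < 1 := (Real.sqrt_lt' one_pos).2 (by rwa [one_pow])
  have hgeom := summable_geometric_of_lt_one hs₀ hs₁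
  refine .of_norm_bounded (hgeom.mul_of_nonneg hgeom (fun _ => by positivity)
    fun _ => by positivity) ?_
  rintro ⟨m, k⟩
  rcases le_or_gt k m with hkm | hmk
  · calc ‖F (m, k)‖ ≤ ρ ^ m := hF m k hkm
      _ = s ^ m * s ^ m := by rw [← mul_pow, Real.mul_self_sqrt hρ₀]
      _ ≤ s ^ m * s ^ k :=
          mul_le_mul_of_nonneg_left (pow_le_pow_of_le_one hs₀ hs₁.le hkm) (by positivity)
  · rw [hF₀ m k hmk, norm_zero]
    positivity

namespace PadicInt

variable {p : ℕ} [Fact p.Prime]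

lemma norm_pow_sub_one_le (u : ℤ_[p]) (n : ℕ) : ‖u ^ n - 1‖ ≤ ‖u - 1‖ := by
  obtain ⟨c, hc⟩ : u - 1 ∣ u ^ n - 1 := by simpa using sub_dvd_pow_sub_pow u 1 n
  rw [hc, norm_mul]
  exact mul_le_of_le_one_right (norm_nonneg _) (norm_le_one c)

lemma summable_mul_pow (c : ℕ → ℤ_[p]) {t : ℤ_[p]} (ht : ‖t‖ < 1) :
    Summable fun k => c k * t ^ k :=
  .of_norm_bounded (summable_geometric_of_lt_one (norm_nonneg t) ht) fun k => by
    rw [norm_mul, norm_pow]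
    exact mul_le_of_le_one_left (by positivity) (norm_le_one _)

end PadicInt

section Substitution

variable {p : ℕ} [Fact p.Prime] (a : ℕ → ℤ_[p]) (u : ℤ_[p])

/-- The contribution of `a m * X ^ m` to the `k`-th coefficient of `H (u * X + (u - 1))`. -/
noncomputable def substCoeffTerm (k m : ℕ) : ℤ_[p] :=
  a m * (m.choose k : ℤ_[p]) * u ^ k * (u - 1) ^ (m - k)

variable {a u}

lemma substCoeffTerm_of_lt {k m : ℕ} (h : m < k) : substCoeffTerm a u k m = 0 := by
  simp [substCoeffTerm, Nat.choose_eq_zero_of_lt h]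

lemma norm_substCoeffTerm_le (k m : ℕ) : ‖substCoeffTerm a u k m‖ ≤ ‖u - 1‖ ^ (m - k) := by
  rw [substCoeffTerm, norm_mul, norm_pow]
  exact mul_le_of_le_one_left (by positivity) (PadicInt.norm_le_one _)

lemma summable_substCoeffTerm (hu : ‖u - 1‖ < 1) (k : ℕ) : Summable (substCoeffTerm a u k) := by
  rw [← summable_nat_add_iff k]
  refine .of_norm_bounded (summable_geometric_of_lt_one (norm_nonneg _) hu) fun j => ?_
  simpa using norm_substCoeffTerm_le (a := a) k (j + k)

lemma tsum_substCoeffTerm_mul_pow (t : ℤ_[p]) (m : ℕ) :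
    ∑' k, substCoeffTerm a u k m * t ^ k = a m * (u * t + (u - 1)) ^ m := by
  rw [tsum_eq_sum (s := range (m + 1)) fun k hk =>
      by rw [substCoeffTerm_of_lt (by simpa using hk), zero_mul],
    add_pow, mul_sum]
  refine sum_congr rfl fun k _ => ?_
  rw [substCoeffTerm]
  ring

lemma tsum_tsum_substCoeffTerm_mul_pow (hu : ‖u - 1‖ < 1) {t : ℤ_[p]} (ht : ‖t‖ < 1) :
    ∑' k, (∑' m, substCoeffTerm a u k m) * t ^ k = ∑' m, a m * (u * t + (u - 1)) ^ m := by
  set ρ := max ‖u - 1‖ ‖t‖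
  have hsum : Summable fun q : ℕ × ℕ => substCoeffTerm a u q.2 q.1 * t ^ q.2 := by
    refine summable_of_norm_le_pow_fst (by positivity) (max_lt hu ht) (fun m k hkm => ?_)
      fun m k hmk => by rw [substCoeffTerm_of_lt hmk, zero_mul]
    calc ‖substCoeffTerm a u k m * t ^ k‖ ≤ ‖u - 1‖ ^ (m - k) * ‖t‖ ^ k := by
          rw [norm_mul, norm_pow]; gcongr; exact norm_substCoeffTerm_le k m
      _ ≤ ρ ^ (m - k) * ρ ^ k := by gcongr; exacts [le_max_left _ _, le_max_right _ _]
      _ = ρ ^ m := by rw [← pow_add, Nat.sub_add_cancel hkm]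
  calc ∑' k, (∑' m, substCoeffTerm a u k m) * t ^ k
      = ∑' k, ∑' m, substCoeffTerm a u k m * t ^ k :=
        tsum_congr fun k => ((summable_substCoeffTerm hu k).tsum_mul_right _).symm
    _ = ∑' m, ∑' k, substCoeffTerm a u k m * t ^ k :=
        hsum.tsum_comm (f := fun m k => substCoeffTerm a u k m * t ^ k)
    _ = ∑' m, a m * (u * t + (u - 1)) ^ m := tsum_congr (tsum_substCoeffTerm_mul_pow t)

lemma norm_tsum_substCoeffTerm_sub_le (hu : ‖u - 1‖ < 1) (k : ℕ) :
    ‖(∑' m, substCoeffTerm a u k m) - a k‖ ≤ ‖u - 1‖ := by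
  classical
  rw [← tsum_ite_eq k (fun _ => a k), ← (summable_substCoeffTerm hu k).tsum_sub
    (hasSum_ite_eq k (a k)).summable]
  refine IsUltrametricDist.norm_tsum_le_of_forall_le_of_nonneg (norm_nonneg _) fun m => ?_
  rcases lt_trichotomy m k with hmk | rfl | hkm
  · simp [substCoeffTerm_of_lt hmk, hmk.ne]
  · have hdiag : substCoeffTerm a u m m - a m = a m * (u ^ m - 1) := by
      simp only [substCoeffTerm, Nat.choose_self, Nat.sub_self]; ring
    rw [if_pos rfl, hdiag, norm_mul]
    exact (mul_le_of_le_one_left (norm_nonneg _) (PadicInt.norm_le_one _)).trans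
      (PadicInt.norm_pow_sub_one_le u m)
  · rw [if_neg hkm.ne', sub_zero]
    exact (norm_substCoeffTerm_le k m).trans
      (pow_le_of_le_one (norm_nonneg _) hu.le (by omega))

end Substitution

theorem fwdDiff_iwasawaFn_substituted_series_general
    (p : ℕ) [Fact p.Prime] (u : ℤ_[p]) (hu : u - 1 ∈ Ideal.span {(p : ℤ_[p])})
    (a : ℕ → ℤ_[p])
    (g : ℕ → ℤ_[p]) (hgdef : ∀ n : ℕ, g n = ∑' k : ℕ, a k * (u ^ n - 1) ^ k)
    (b : ℕ → ℤ_[p])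
    (hbdef : ∀ k : ℕ,
      b k = (∑' m : ℕ, a m * (m.choose k : ℤ_[p]) * u ^ k * (u - 1) ^ (m - k)) - a k) :
    (∀ k : ℕ,
        Summable (fun m : ℕ => a m * (m.choose k : ℤ_[p]) * u ^ k * (u - 1) ^ (m - k)))
      ∧ (∀ k : ℕ, b k ∈ Ideal.span {(p : ℤ_[p])})
      ∧ (∀ n : ℕ, fwdDiff 1 g n = ∑' k : ℕ, b k * (u ^ n - 1) ^ k) := by
  have hu₁ : ‖u - 1‖ < 1 := (PadicInt.norm_lt_one_iff_dvd _).2 (Ideal.mem_span_singleton.1 hu)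
  refine ⟨summable_substCoeffTerm hu₁, fun k => ?_, fun n => ?_⟩
  · rw [Ideal.mem_span_singleton, ← PadicInt.norm_lt_one_iff_dvd, hbdef]
    exact (norm_tsum_substCoeffTerm_sub_le hu₁ k).trans_lt hu₁
  · have ht : ‖u ^ n - 1‖ < 1 := (PadicInt.norm_pow_sub_one_le u n).trans_lt hu₁
    have hshift : u * (u ^ n - 1) + (u - 1) = u ^ (n + 1) - 1 := by ring
    simp_rw [hbdef, sub_mul]
    rw [(PadicInt.summable_mul_pow _ ht).tsum_sub (PadicInt.summable_mul_pow _ ht)]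
    change g (n + 1) - g n = _
    rw [hgdef, hgdef, ← hshift, ← tsum_tsum_substCoeffTerm_mul_pow hu₁ ht]
    rfl

/-- **Rubin's lemma: the difference operator maps Iwasawa functions into `p·𝓘`**
(one-variable, `ℤ_p`-coefficient form).
Fix a prime `p`, `u ∈ ℤ_p` with `u − 1 ∈ pℤ_p`, and `H = ∑_k a_k X^k ∈ ℤ_p[[X]]`.
The substituted series `H̃(X) = H(u·X + (u−1)) − H(X)` is a well-defined power series:
its `k`-th coefficient is `b_k = (∑_{m} a_m · C(m,k) · u^k · (u−1)^{m−k}) − a_k`, where each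
of these coefficient families is summable in `ℤ_p` (legitimacy of the substitution, since
`u − 1` is topologically nilpotent).  All the `b_k` lie in `pℤ_p`, and writing
`g(n) = ∑_k a_k (u^n − 1)^k` one has `(Δg)(n) = ∑_k b_k (u^n − 1)^k` for every `n`. -/
theorem fwdDiff_iwasawaFn_substituted_series
    (p : ℕ) [Fact p.Prime] (u : ℤ_[p]) (hu : u - 1 ∈ Ideal.span {(p : ℤ_[p])})
    (H : PowerSeries ℤ_[p])
    (a : ℕ → ℤ_[p]) (ha : ∀ k, a k = PowerSeries.coeff k H)
    (g : ℕ → ℤ_[p]) (hgdef : ∀ n : ℕ, g n = ∑' k : ℕ, a k * (u ^ n - 1) ^ k)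
    (b : ℕ → ℤ_[p])
    (hbdef : ∀ k : ℕ,
      b k = (∑' m : ℕ, a m * (m.choose k : ℤ_[p]) * u ^ k * (u - 1) ^ (m - k)) - a k) :
    (∀ k : ℕ,
        Summable (fun m : ℕ => a m * (m.choose k : ℤ_[p]) * u ^ k * (u - 1) ^ (m - k)))
      ∧ (∀ k : ℕ, b k ∈ Ideal.span {(p : ℤ_[p])})
      ∧ (∀ n : ℕ, fwdDiff 1 g n = ∑' k : ℕ, b k * (u ^ n - 1) ^ k) :=
  fwdDiff_iwasawaFn_substituted_series_general p u hu a g hgdef b hbdef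
end

section
/- Let p be a prime, m ≥ 1 an integer, and u_1, …, u_m ∈ ℤ_p with u_j − 1 ∈ pℤ_p for each j. Let H = ∑_d a_d X^d be a formal power series in m variables with coefficients a_d ∈ ℤ_p, where d ranges over finitely supported functions d : {1,…,m} → ℕ. For each n ∈ ℕ the family (a_d · ∏_{j=1}^m (u_j^n − 1)^{d(j)})_d is summable in ℤ_p, and its sum defines a function g : ℕ → ℤ_p, g(n) = ∑_d a_d ∏_{j=1}^m (u_j^n − 1)^{d(j)}. Then for all integers i, n ≥ 0, the i-th iterated forward difference satisfies (Δ^i g)(n) ∈ p^i ℤ_p. -/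
/-!
Each term `n ↦ a_d ∏_j (u_j^n - 1)^{d_j}` lies in the algebra spanned by the geometric sequences
`n ↦ w^n` with `w ≡ 1 mod p`, on which `Δ^i (w^n) = (w - 1)^i w^n ∈ p^i ℤ_p`. The `d`-th term lies
in `p^{|d|} ℤ_p`, so the series converges; `Δ^i` is a finite combination of shifts, hence commutes
with the sum, and `p^i ℤ_p` is closed.
-/

open Filter

section GeometricSequences

variable {R : Type*} [CommRing R]

lemma fwdDiff_iter_pow_apply (w : R) (i n : ℕ) :
    (fwdDiff 1)^[i] (w ^ ·) n = (w - 1) ^ i * w ^ n := by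
  simpa using fwdDiff_addChar_eq ⟨(w ^ ·), pow_zero w, pow_add w⟩ n 1 i

def geomSeqs (I : Ideal R) : Submonoid (ℕ → R) where
  carrier := {g | ∃ w, w - 1 ∈ I ∧ g = (w ^ ·)}
  one_mem' := ⟨1, by simp, by ext; simp⟩
  mul_mem' := by
    rintro _ _ ⟨v, hv, rfl⟩ ⟨w, hw, rfl⟩
    refine ⟨v * w, ?_, by ext; simp [mul_pow]⟩
    have : v * w - 1 = (v - 1) * w + (w - 1) := by ring
    exact this ▸ add_mem (I.mul_mem_right w hv) hw

variable {I : Ideal R}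

lemma pow_mem_geomSeqs {w : R} (hw : w - 1 ∈ I) : (w ^ ·) ∈ geomSeqs I := ⟨w, hw, rfl⟩

lemma fwdDiff_iter_mem_pow_of_mem_adjoin_geomSeqs {g : ℕ → R}
    (hg : g ∈ Algebra.adjoin R (geomSeqs I : Set (ℕ → R))) (i n : ℕ) :
    (fwdDiff 1)^[i] g n ∈ I ^ i := by
  rw [← Subalgebra.mem_toSubmodule, Algebra.adjoin_eq_span, Submonoid.closure_eq] at hg
  induction hg using Submodule.span_induction with
  | mem g hg =>
    obtain ⟨w, hw, rfl⟩ := hg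
    rw [fwdDiff_iter_pow_apply]
    exact Ideal.mul_mem_right _ _ (Ideal.pow_mem_pow hw i)
  | zero =>
    rw [Function.iterate_fixed (show fwdDiff 1 (0 : ℕ → R) = 0 from fwdDiff_const 1 0)]
    exact zero_mem _
  | add g h _ _ hg hh => rw [fwdDiff_iter_add]; exact add_mem hg hh
  | smul c g _ hg => rw [fwdDiff_iter_const_smul]; exact Submodule.smul_mem _ c hg

lemma prod_pow_sub_one_pow_mem_adjoin_geomSeqs {σ : Type*} [Fintype σ] {u : σ → R}
    (hu : ∀ j, u j - 1 ∈ I) (d : σ → ℕ) :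
    (fun n => ∏ j, (u j ^ n - 1) ^ d j) ∈ Algebra.adjoin R (geomSeqs I : Set (ℕ → R)) := by
  have hprod : (fun n => ∏ j, (u j ^ n - 1) ^ d j) = ∏ j, ((u j ^ ·) - 1) ^ d j := by
    ext n; simp [Finset.prod_apply]
  rw [hprod]
  exact Subalgebra.prod_mem _ fun j _ => Subalgebra.pow_mem _
    (Subalgebra.sub_mem _ (Algebra.subset_adjoin (pow_mem_geomSeqs (hu j))) (Subalgebra.one_mem _)) _

end GeometricSequences

section TsumFwdDiff

variable {ι M G : Type*} [AddCommMonoid M] [AddCommGroup G] [TopologicalSpace G]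
  [IsTopologicalAddGroup G] {f : ι → M → G}

lemma summable_fwdDiff_iter (hf : ∀ y, Summable fun d => f d y) (h : M) (i : ℕ) (y : M) :
    Summable fun d => (fwdDiff h)^[i] (f d) y := by
  simp_rw [fwdDiff_iter_eq_sum_shift]
  exact summable_sum fun k _ => (hf _).const_smul _

lemma fwdDiff_iter_tsum [T2Space G] (hf : ∀ y, Summable fun d => f d y) (h : M) (i : ℕ) (y : M) :
    (fwdDiff h)^[i] (fun y => ∑' d, f d y) y = ∑' d, (fwdDiff h)^[i] (f d) y := by
  simp_rw [fwdDiff_iter_eq_sum_shift]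
  rw [Summable.tsum_finsetSum fun k _ => (hf _).const_smul _]
  simp_rw [Summable.tsum_const_smul _ (hf _)]

end TsumFwdDiff

lemma Ideal.pow_sub_one_mem {R : Type*} [CommRing R] {I : Ideal R} {u : R} (hu : u - 1 ∈ I)
    (n : ℕ) : u ^ n - 1 ∈ I :=
  I.mem_of_dvd (by simpa using sub_dvd_pow_sub_pow u 1 n) hu

lemma Ideal.mul_prod_pow_mem_pow_degree {R σ : Type*} [CommRing R] [Fintype σ] {I : Ideal R}
    {x : σ → R} (hx : ∀ j, x j ∈ I) (c : R) (d : σ →₀ ℕ) :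
    c * ∏ j, x j ^ d j ∈ I ^ d.degree := by
  rw [Finsupp.degree_eq_sum, ← Finset.prod_pow_eq_pow_sum]
  exact Ideal.mul_mem_left _ c (Ideal.prod_mem_prod fun j _ => Ideal.pow_mem_pow (hx j) _)

namespace PadicInt

variable {p : ℕ} [Fact p.Prime]

lemma isClosed_span_p_pow (i : ℕ) :
    IsClosed ((Ideal.span {(p : ℤ_[p])} ^ i : Ideal ℤ_[p]) : Set ℤ_[p]) := by
  have : ((Ideal.span {(p : ℤ_[p])} ^ i : Ideal ℤ_[p]) : Set ℤ_[p])
      = {x | ‖x‖ ≤ (p : ℝ) ^ (-(i : ℤ))} := by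
    ext x
    rw [SetLike.mem_coe, Ideal.span_singleton_pow, ← norm_le_pow_iff_mem_span_pow]
    rfl
  exact this ▸ isClosed_le continuous_norm continuous_const

lemma summable_mul_prod_pow {σ : Type*} [Fintype σ] {x : σ → ℤ_[p]}
    (hx : ∀ j, x j ∈ Ideal.span {(p : ℤ_[p])}) (a : (σ →₀ ℕ) → ℤ_[p]) :
    Summable fun d : σ →₀ ℕ => a d * ∏ j, x j ^ d j := by
  refine NonarchimedeanAddGroup.summable_of_tendsto_cofinite_zero ?_
  have hdeg : Tendsto (fun d : σ →₀ ℕ => d.degree) cofinite atTop :=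
    tendsto_atTop.2 fun N => eventually_cofinite.2 <|
      (Finsupp.finite_of_degree_le N).subset fun d hd => (not_le.1 hd).le
  have hbound : ∀ d : σ →₀ ℕ, ‖a d * ∏ j, x j ^ d j‖ ≤ (p : ℝ)⁻¹ ^ d.degree := by
    intro d
    have := Ideal.mul_prod_pow_mem_pow_degree hx (a d) d
    rw [Ideal.span_singleton_pow, ← norm_le_pow_iff_mem_span_pow] at this
    simpa using this
  refine squeeze_zero_norm hbound ((tendsto_pow_atTop_nhds_zero_of_lt_one ?_ ?_).comp hdeg)
  · positivity
  · exact inv_lt_one_of_one_lt₀ (by exact_mod_cast (Fact.out : p.Prime).one_lt)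

end PadicInt

theorem fwdDiff_iterate_generalizedIwasawaFn_mem_pow_general
    (p : ℕ) [Fact p.Prime] (m : ℕ)
    (u : Fin m → ℤ_[p]) (hu : ∀ j, u j - 1 ∈ Ideal.span {(p : ℤ_[p])})
    (a : (Fin m →₀ ℕ) → ℤ_[p]) :
    (∀ n : ℕ,
        Summable (fun d : Fin m →₀ ℕ => a d * ∏ j : Fin m, (u j ^ n - 1) ^ d j))
      ∧ (∀ i n : ℕ,
          (fwdDiff 1)^[i]
              (fun n : ℕ => ∑' d : Fin m →₀ ℕ, a d * ∏ j : Fin m, (u j ^ n - 1) ^ d j) n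
            ∈ Ideal.span {(p : ℤ_[p])} ^ i) := by
  have hsum (n : ℕ) :
      Summable (fun d : Fin m →₀ ℕ => a d * ∏ j : Fin m, (u j ^ n - 1) ^ d j) :=
    PadicInt.summable_mul_prod_pow (fun j => Ideal.pow_sub_one_mem (hu j) n) a
  refine ⟨hsum, fun i n => ?_⟩
  rw [fwdDiff_iter_tsum hsum]
  refine tsum_mem (PadicInt.isClosed_span_p_pow i) fun d => ?_
  exact fwdDiff_iter_mem_pow_of_mem_adjoin_geomSeqs
    (Subalgebra.smul_mem _ (prod_pow_sub_one_pow_mem_adjoin_geomSeqs hu d) (a d)) i n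

/-- **Iterated differences of generalized (multi-variable) Iwasawa functions.**
Let `p` be a prime, `m ≥ 1`, and `u_1, …, u_m ∈ ℤ_p` with `u_j − 1 ∈ pℤ_p`.  Let
`H = ∑_d a_d X^d` be a formal power series in `m` variables over `ℤ_p`, `d` ranging over
finitely supported functions `{1,…,m} → ℕ`.  For each `n` the family
`(a_d ∏_j (u_j^n − 1)^{d j})_d` is summable in `ℤ_p`, and its sum defines a function
`g : ℕ → ℤ_p`.  Then for all `i, n ≥ 0`, `(Δ^i g)(n) ∈ p^i ℤ_p`. -/
theorem fwdDiff_iterate_generalizedIwasawaFn_mem_pow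
    (p : ℕ) [Fact p.Prime] (m : ℕ) (hm : 1 ≤ m)
    (u : Fin m → ℤ_[p]) (hu : ∀ j, u j - 1 ∈ Ideal.span {(p : ℤ_[p])})
    (H : MvPowerSeries (Fin m) ℤ_[p])
    (a : (Fin m →₀ ℕ) → ℤ_[p]) (ha : ∀ d, a d = MvPowerSeries.coeff d H) :
    (∀ n : ℕ,
        Summable (fun d : Fin m →₀ ℕ => a d * ∏ j : Fin m, (u j ^ n - 1) ^ d j))
      ∧ (∀ i n : ℕ,
          (fwdDiff 1)^[i]
              (fun n : ℕ => ∑' d : Fin m →₀ ℕ, a d * ∏ j : Fin m, (u j ^ n - 1) ^ d j) n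
            ∈ Ideal.span {(p : ℤ_[p])} ^ i) :=
  fwdDiff_iterate_generalizedIwasawaFn_mem_pow_general p m u hu a
end
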